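/- arXiv:math/0412144 — 2 statements merged into one kernel-verified Lean document; each statement's English description precedes it below -/
import Mathlib

section
/- Let the ambient space be an n-dimensional complex inner product space. For every m ≥ 1 and all subspaces p₁, q₁, r₁, …, pₘ, qₘ, rₘ, the iterated restricted distributivity test formula satisfies 2^m · dim(αᵐ(pₘ,qₘ,rₘ)) ≤ n. -/
/-- The distributivity test formula `α(p,q,r) = (a ⊔ b) ⊓ (aᗮ ⊔ bᗮ)` where
`a = p ⊔ (q ⊓ r)` and `b = (p ⊔ q) ⊓ (p ⊔ r)`. -/
noncomputable def distribTest {E : Type*} [NormedAddCommGroup E] [InnerProductSpace ℂ E]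
    (p q r : Submodule ℂ E) : Submodule ℂ E :=
  ((p ⊔ (q ⊓ r)) ⊔ ((p ⊔ q) ⊓ (p ⊔ r))) ⊓ ((p ⊔ (q ⊓ r))ᗮ ⊔ ((p ⊔ q) ⊓ (p ⊔ r))ᗮ)

/-- The restriction `α|_γ(p,q,r)` of the distributivity test formula to `γ`:
write `α` in negation normal form `((p ⊔ q) ⊓ (p ⊔ r)) ⊓ (pᗮ ⊓ (qᗮ ⊔ rᗮ))` and
replace each variable `x` by `x ⊓ γ` and each negated variable `xᗮ` by `xᗮ ⊓ γ`. -/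
noncomputable def distribTestRes {E : Type*} [NormedAddCommGroup E] [InnerProductSpace ℂ E]
    (γ p q r : Submodule ℂ E) : Submodule ℂ E :=
  (((p ⊓ γ) ⊔ (q ⊓ γ)) ⊓ ((p ⊓ γ) ⊔ (r ⊓ γ))) ⊓ ((pᗮ ⊓ γ) ⊓ ((qᗮ ⊓ γ) ⊔ (rᗮ ⊓ γ)))

/-- The iterated restricted distributivity test formula:
`distribTestIter p q r m` is `α^(m+1)(p (m+1), q (m+1), r (m+1))`, where
`α¹(p₁,q₁,r₁) = α(p₁,q₁,r₁)` and `αᵐ(pₘ,qₘ,rₘ) = α|_(α^(m-1))(pₘ,qₘ,rₘ)`.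
The variables `pⱼ, qⱼ, rⱼ` (for `1 ≤ j ≤ m+1`) are given as `p j, q j, r j`. -/
noncomputable def distribTestIter {E : Type*} [NormedAddCommGroup E] [InnerProductSpace ℂ E]
    (p q r : ℕ → Submodule ℂ E) : ℕ → Submodule ℂ E
  | 0 => distribTest (p 1) (q 1) (r 1)
  | (m + 1) => distribTestRes (distribTestIter p q r m) (p (m + 2)) (q (m + 2)) (r (m + 2))

/-!
Write `a = p ⊔ (q ⊓ r) ≤ b = (p ⊔ q) ⊓ (p ⊔ r)`. Both `α(p,q,r)` and the restricted test
`α|_γ(p,q,r)` lie in a space of the form `aᗮ ⊓ b` (for `p, q, r` resp. `p ⊓ γ, q ⊓ γ, r ⊓ γ`),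
whose dimension is the distributivity defect `dim b - dim a`. The modular law
`b = p ⊔ (q ⊓ (p ⊔ r))` bounds this defect by `dim p ≤ dim a`, so `2 · dim (aᗮ ⊓ b) ≤ dim b`,
and `b ≤ γ` in the restricted case. Each restriction therefore at least halves the dimension.
-/

open Module Submodule

namespace Submodule

theorem finrank_sup_inf_sup_le_finrank_sup_inf_add {K V : Type*} [DivisionRing K]
    [AddCommGroup V] [Module K V] [FiniteDimensional K V] (p q r : Submodule K V) :
    finrank K ↥((p ⊔ q) ⊓ (p ⊔ r)) ≤ finrank K ↥(p ⊔ q ⊓ r) + finrank K p := by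
  set q' := q ⊓ (p ⊔ r)
  have modular : (p ⊔ q) ⊓ (p ⊔ r) = p ⊔ q' := sup_inf_assoc_of_le q le_sup_left
  have hq'r : q' ⊓ r = q ⊓ r := by
    rw [inf_assoc, inf_eq_right.2 (le_sup_right : r ≤ p ⊔ r)]
  have hb := finrank_sup_add_finrank_inf_eq p q'
  have ha := finrank_sup_add_finrank_inf_eq p (q ⊓ r)
  have hq'r_dim := finrank_sup_add_finrank_inf_eq q' r
  rw [hq'r] at hq'r_dim
  have h_inf : finrank K ↥(p ⊓ (q ⊓ r)) ≤ finrank K ↥(p ⊓ q') :=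
    finrank_mono (inf_le_inf_left p (inf_le_inf_left q le_sup_right))
  have h_sup : finrank K ↥(q' ⊔ r) ≤ finrank K p + finrank K r :=
    (finrank_mono (sup_le inf_le_right le_sup_right)).trans (finrank_add_le_finrank_add_finrank p r)
  rw [modular]
  omega

variable {𝕜 E : Type*} [RCLike 𝕜] [NormedAddCommGroup E] [InnerProductSpace 𝕜 E]

theorem two_mul_finrank_orthogonal_inf_le [FiniteDimensional 𝕜 E] (p q r : Submodule 𝕜 E) :
    2 * finrank 𝕜 ↥((p ⊔ q ⊓ r)ᗮ ⊓ ((p ⊔ q) ⊓ (p ⊔ r))) ≤ finrank 𝕜 ↥((p ⊔ q) ⊓ (p ⊔ r)) := by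
  have h_compl := finrank_add_inf_finrank_orthogonal (sup_inf_le : p ⊔ q ⊓ r ≤ (p ⊔ q) ⊓ (p ⊔ r))
  have h_defect := finrank_sup_inf_sup_le_finrank_sup_inf_add p q r
  have h_p : finrank 𝕜 p ≤ finrank 𝕜 ↥(p ⊔ q ⊓ r) := finrank_mono le_sup_left
  omega

theorem orthogonal_inf_sup_orthogonal_le (p q r : Submodule 𝕜 E) :
    pᗮ ⊓ (qᗮ ⊔ rᗮ) ≤ (p ⊔ q ⊓ r)ᗮ := by
  rw [← inf_orthogonal]
  exact inf_le_inf_left _ (sup_le (orthogonal_le inf_le_left) (orthogonal_le inf_le_right))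

end Submodule

section DistribTest

variable {E : Type*} [NormedAddCommGroup E] [InnerProductSpace ℂ E]

theorem distribTest_eq (p q r : Submodule ℂ E) :
    distribTest p q r = (p ⊔ q ⊓ r)ᗮ ⊓ ((p ⊔ q) ⊓ (p ⊔ r)) := by
  have hab : p ⊔ q ⊓ r ≤ (p ⊔ q) ⊓ (p ⊔ r) := sup_inf_le
  rw [distribTest, sup_eq_right.2 hab, sup_eq_left.2 (orthogonal_le hab), inf_comm]

theorem distribTestRes_le (γ p q r : Submodule ℂ E) :
    distribTestRes γ p q r ≤
      ((p ⊓ γ) ⊔ (q ⊓ γ) ⊓ (r ⊓ γ))ᗮ ⊓ (((p ⊓ γ) ⊔ (q ⊓ γ)) ⊓ ((p ⊓ γ) ⊔ (r ⊓ γ))) := by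
  have h_pos : pᗮ ⊓ γ ≤ (p ⊓ γ)ᗮ := inf_le_left.trans (orthogonal_le inf_le_left)
  have h_neg : (qᗮ ⊓ γ) ⊔ (rᗮ ⊓ γ) ≤ (q ⊓ γ)ᗮ ⊔ (r ⊓ γ)ᗮ :=
    sup_le_sup (inf_le_left.trans (orthogonal_le inf_le_left))
      (inf_le_left.trans (orthogonal_le inf_le_left))
  rw [distribTestRes]
  exact le_inf (inf_le_right.trans
    ((inf_le_inf h_pos h_neg).trans (orthogonal_inf_sup_orthogonal_le _ _ _))) inf_le_left

variable [FiniteDimensional ℂ E]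

theorem two_mul_finrank_distribTest_le (p q r : Submodule ℂ E) :
    2 * finrank ℂ (distribTest p q r) ≤ finrank ℂ E := by
  rw [distribTest_eq]
  exact (two_mul_finrank_orthogonal_inf_le p q r).trans (finrank_le _)

theorem two_mul_finrank_distribTestRes_le (γ p q r : Submodule ℂ E) :
    2 * finrank ℂ (distribTestRes γ p q r) ≤ finrank ℂ γ :=
  calc 2 * finrank ℂ (distribTestRes γ p q r)
      ≤ 2 * finrank ℂ ↥(((p ⊓ γ) ⊔ (q ⊓ γ) ⊓ (r ⊓ γ))ᗮ ⊓
          (((p ⊓ γ) ⊔ (q ⊓ γ)) ⊓ ((p ⊓ γ) ⊔ (r ⊓ γ)))) :=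
        Nat.mul_le_mul_left 2 (finrank_mono (distribTestRes_le γ p q r))
    _ ≤ finrank ℂ ↥(((p ⊓ γ) ⊔ (q ⊓ γ)) ⊓ ((p ⊓ γ) ⊔ (r ⊓ γ))) :=
        two_mul_finrank_orthogonal_inf_le _ _ _
    _ ≤ finrank ℂ γ := finrank_mono (inf_le_left.trans (sup_le inf_le_right inf_le_right))

theorem pow_succ_mul_finrank_distribTestIter_le (p q r : ℕ → Submodule ℂ E) (k : ℕ) :
    2 ^ (k + 1) * finrank ℂ (distribTestIter p q r k) ≤ finrank ℂ E := by
  induction k with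
  | zero => exact two_mul_finrank_distribTest_le (p 1) (q 1) (r 1)
  | succ k ih =>
    calc 2 ^ (k + 2) * finrank ℂ (distribTestIter p q r (k + 1))
        = 2 ^ (k + 1) * (2 * finrank ℂ
            (distribTestRes (distribTestIter p q r k) (p (k + 2)) (q (k + 2)) (r (k + 2)))) := by
          rw [distribTestIter, pow_succ, mul_assoc]
      _ ≤ 2 ^ (k + 1) * finrank ℂ (distribTestIter p q r k) :=
          Nat.mul_le_mul_left _ (two_mul_finrank_distribTestRes_le _ _ _ _)
      _ ≤ finrank ℂ E := ih

end DistribTest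

theorem pow_two_mul_finrank_distribTestIter_le
    {E : Type*} [NormedAddCommGroup E] [InnerProductSpace ℂ E]
    [FiniteDimensional ℂ E] (n : ℕ) (hn : Module.finrank ℂ E = n)
    (p q r : ℕ → Submodule ℂ E) (m : ℕ) (hm : 1 ≤ m) :
    2 ^ m * Module.finrank ℂ (distribTestIter p q r (m - 1)) ≤ n := by
  obtain ⟨k, rfl⟩ : ∃ k, m = k + 1 := ⟨m - 1, (Nat.sub_add_cancel hm).symm⟩
  exact hn ▸ pow_succ_mul_finrank_distribTestIter_le p q r k
end

section
/- Let p, q, r, s be subspaces of ℂ² (i.e., of EuclideanSpace ℂ (Fin 2)) and define γ(p,q,r,s) = α(α(α(α(p,q,r), p, s), q, s), r, s). If γ(p,q,r,s) ≠ ⊥, then p, q, r, s are pairwise distinct one-dimensional subspaces (dim p = dim q = dim r = dim s = 1 and all of p, q, r, s are pairwise distinct). -/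
/-- `γ(p,q,r,s) = α(α(α(α(p,q,r), p, s), q, s), r, s)`. -/
noncomputable def gammaTest {E : Type*} [NormedAddCommGroup E] [InnerProductSpace ℂ E]
    (p q r s : Submodule ℂ E) : Submodule ℂ E :=
  distribTest (distribTest (distribTest (distribTest p q r) p s) q s) r s

/-- If the distributive law holds for `p, q, r`, the test collapses to `⊥`. -/
lemma distribTest_eq_bot_of_eq {E : Type*} [NormedAddCommGroup E] [InnerProductSpace ℂ E]
    (p q r : Submodule ℂ E) (heq : p ⊔ (q ⊓ r) = (p ⊔ q) ⊓ (p ⊔ r)) :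
    distribTest p q r = ⊥ := by
  unfold distribTest
  rw [← heq, sup_idem, sup_idem, Submodule.inf_orthogonal_eq_bot]

/-- In degenerate configurations, the distributive law holds (pure lattice facts). -/
lemma deg_distrib {E : Type*} [NormedAddCommGroup E] [InnerProductSpace ℂ E]
    (p q r : Submodule ℂ E)
    (hd : p = ⊥ ∨ p = ⊤ ∨ q = ⊥ ∨ q = ⊤ ∨ r = ⊥ ∨ r = ⊤ ∨ p = q ∨ p = r ∨ q = r) :
    p ⊔ (q ⊓ r) = (p ⊔ q) ⊓ (p ⊔ r) := by
  rcases hd with rfl | rfl | rfl | rfl | rfl | rfl | rfl | rfl | rfl <;> simp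

/-- Any subspace of `ℂ²` that is not a line is `⊥` or `⊤`. -/
lemma bot_or_top_of_ne_one (p : Submodule ℂ (EuclideanSpace ℂ (Fin 2)))
    (hp : Module.finrank ℂ p ≠ 1) : p = ⊥ ∨ p = ⊤ := by
  have hle : Module.finrank ℂ p ≤ 2 := by
    have := Submodule.finrank_le p
    simpa using this
  have h012 : Module.finrank ℂ p = 0 ∨ Module.finrank ℂ p = 2 := by omega
  rcases h012 with h | h
  · exact Or.inl (Submodule.finrank_eq_zero.mp h)
  · refine Or.inr (Submodule.eq_top_of_finrank_eq ?_)
    simp [h]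

/-- Key lemma: a nontrivial distributivity test forces three distinct lines. -/
lemma distribTest_ne_bot_imp (p q r : Submodule ℂ (EuclideanSpace ℂ (Fin 2)))
    (h : distribTest p q r ≠ ⊥) :
    Module.finrank ℂ p = 1 ∧ Module.finrank ℂ q = 1 ∧ Module.finrank ℂ r = 1 ∧
      p ≠ q ∧ p ≠ r ∧ q ≠ r := by
  have key : ¬ (p = ⊥ ∨ p = ⊤ ∨ q = ⊥ ∨ q = ⊤ ∨ r = ⊥ ∨ r = ⊤ ∨ p = q ∨ p = r ∨ q = r) := by
    intro hd
    exact h (distribTest_eq_bot_of_eq p q r (deg_distrib p q r hd))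
  push_neg at key
  obtain ⟨h1, h2, h3, h4, h5, h6, h7, h8, h9⟩ := key
  refine ⟨?_, ?_, ?_, h7, h8, h9⟩
  · by_contra hc
    rcases bot_or_top_of_ne_one p hc with h | h <;> [exact h1 h; exact h2 h]
  · by_contra hc
    rcases bot_or_top_of_ne_one q hc with h | h <;> [exact h3 h; exact h4 h]
  · by_contra hc
    rcases bot_or_top_of_ne_one r hc with h | h <;> [exact h5 h; exact h6 h]

theorem gammaTest_ne_bot_imp_distinct_lines
    (p q r s : Submodule ℂ (EuclideanSpace ℂ (Fin 2)))
    (h : gammaTest p q r s ≠ ⊥) :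
    Module.finrank ℂ p = 1 ∧ Module.finrank ℂ q = 1 ∧
      Module.finrank ℂ r = 1 ∧ Module.finrank ℂ s = 1 ∧
      p ≠ q ∧ p ≠ r ∧ p ≠ s ∧ q ≠ r ∧ q ≠ s ∧ r ≠ s := by
  set t1 := distribTest p q r with ht1
  set t2 := distribTest t1 p s with ht2
  set t3 := distribTest t2 q s with ht3
  have h4 := distribTest_ne_bot_imp t3 r s h
  have ht3ne : t3 ≠ ⊥ := by
    intro hb
    rw [hb] at h4
    simp at h4
  have h3 := distribTest_ne_bot_imp t2 q s ht3ne
  have ht2ne : t2 ≠ ⊥ := by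
    intro hb
    rw [hb] at h3
    simp at h3
  have h2 := distribTest_ne_bot_imp t1 p s ht2ne
  have ht1ne : t1 ≠ ⊥ := by
    intro hb
    rw [hb] at h2
    simp at h2
  have h1 := distribTest_ne_bot_imp p q r ht1ne
  exact ⟨h1.1, h1.2.1, h1.2.2.1, h3.2.2.1, h1.2.2.2.1, h1.2.2.2.2.1,
    h2.2.2.2.2.2, h1.2.2.2.2.2, h3.2.2.2.2.2, h4.2.2.2.2.2⟩
end
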